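/- Let m, n, r be positive integers with m ≥ n ≥ r. Then ex(K_{m,n}, rK_2) = (r − 1)m, i.e., the maximum number of edges of a spanning subgraph of the complete bipartite graph K_{m,n} containing no matching of size r is (r − 1)m. -/

import Mathlib

open SimpleGraph

/-- A set of edges (as `Sym2 V`) is a matching: pairwise vertex-disjoint. -/
def IsMatchingSet {V : Type*} (M : Finset (Sym2 V)) : Prop :=
  ∀ e ∈ M, ∀ f ∈ M, e ≠ f → ∀ v : V, v ∈ e → v ∉ f

/-- The matching Kneser graph `KG(G, rK₂)`: vertices are the matchings of size `r` in `G`,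
two of them adjacent iff they are edge-disjoint. -/
def matchingKG {V : Type*} (G : SimpleGraph V) (r : ℕ) :
    SimpleGraph {M : Finset (Sym2 V) // ↑M ⊆ G.edgeSet ∧ IsMatchingSet M ∧ M.card = r} where
  Adj A B := Disjoint A.1 B.1 ∧ A ≠ B
  symm := ⟨fun _ _ h => ⟨h.1.symm, Ne.symm h.2⟩⟩
  loopless := ⟨fun _ h => h.2 rfl⟩

/-- `ex(G, rK₂)`: the maximum number of edges of a spanning subgraph of `G`
containing no matching of size `r`. -/
noncomputable def exMatching {V : Type*} (G : SimpleGraph V) (r : ℕ) : ℕ :=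
  sSup {k | ∃ E' : Finset (Sym2 V), ↑E' ⊆ G.edgeSet ∧
    (∀ M ⊆ E', IsMatchingSet M → M.card ≠ r) ∧ E'.card = k}

/-!
Taking all edges at `r - 1` vertices of the smaller side gives `(r - 1) m` edges and no matching
of size `r`. Conversely, by the deficiency version of Hall's theorem, if a spanning subgraph
has no matching of size `r`, some set `S` of the smaller side has fewer than
`|S| - (n - r)` neighbours. The vertices of `S` send at most `|N(S)|` edges each and the other
`n - |S|` vertices at most `m`, so there are at most `m (|N(S)| + n - |S|) ≤ (r - 1) m` edges.
-/

open Finset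

variable {α β : Type*}

def IsPairMatching (Q : Finset (α × β)) : Prop :=
  Set.InjOn Prod.fst (Q : Set (α × β)) ∧ Set.InjOn Prod.snd (Q : Set (α × β))

lemma IsPairMatching.mono {Q Q' : Finset (α × β)} (hQ : IsPairMatching Q) (h : Q' ⊆ Q) :
    IsPairMatching Q' :=
  ⟨hQ.1.mono (coe_subset.2 h), hQ.2.mono (coe_subset.2 h)⟩

section Nbhd

variable [Fintype α] [DecidableEq α] [DecidableEq β]

def nbhd (P : Finset (α × β)) (b : β) : Finset α :=
  univ.filter fun a => (a, b) ∈ P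

@[simp]
lemma mem_nbhd {P : Finset (α × β)} {a : α} {b : β} : a ∈ nbhd P b ↔ (a, b) ∈ P := by
  simp [nbhd]

lemma card_eq_sum_card_nbhd [Fintype β] (P : Finset (α × β)) : #P = ∑ b, #(nbhd P b) := by
  simp only [nbhd, card_filter]
  rw [← Fintype.sum_prod_type_right' (fun a b => if (a, b) ∈ P then 1 else 0), ← card_filter]
  simp

lemma card_le_card_mul_card_biUnion_add [Fintype β] (P : Finset (α × β)) (S : Finset β) :
    #P ≤ #S * #(S.biUnion (nbhd P)) + #Sᶜ * Fintype.card α := by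
  rw [card_eq_sum_card_nbhd, ← sum_add_sum_compl S]
  gcongr
  · exact sum_le_card_nsmul _ _ _ fun b hb => card_le_card (subset_biUnion_of_mem _ hb)
  · exact sum_le_card_nsmul _ _ _ fun b _ => card_le_univ _

end Nbhd

/-- Hall's theorem with deficiency `d`. -/
lemma exists_isPairMatching_of_card_le_card_biUnion_add [Fintype α] [Fintype β] [DecidableEq α]
    [DecidableEq β] (P : Finset (α × β)) (d : ℕ)
    (hall : ∀ S : Finset β, #S ≤ #(S.biUnion (nbhd P)) + d) :
    ∃ Q ⊆ P, IsPairMatching Q ∧ Fintype.card β ≤ #Q + d := by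
  -- adjoin `d` new vertices to `α`, adjacent to all of `β`, and apply Hall's theorem
  let t : β → Finset (α ⊕ Fin d) := fun b => (nbhd P b).map .inl ∪ univ.map .inr
  have hall' : ∀ S : Finset β, #S ≤ #(S.biUnion t) := by
    intro S
    rcases S.eq_empty_or_nonempty with rfl | ⟨b₀, hb₀⟩
    · simp
    have hS : S.biUnion t = (S.biUnion (nbhd P)).map .inl ∪ univ.map .inr := by
      ext (a | i)
      · simp [t]
      · simpa [t] using ⟨b₀, hb₀⟩
    rw [hS, card_union_of_disjoint (by simp [Finset.disjoint_left]), card_map, card_map, card_univ,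
      Fintype.card_fin]
    exact hall S
  obtain ⟨f, hf_inj, hf⟩ := (all_card_le_biUnion_card_iff_exists_injective t).1 hall'
  set Q := P.filter fun p => f p.2 = .inl p.1
  have hfQ {p : α × β} (hp : p ∈ Q) : f p.2 = .inl p.1 := (mem_filter.1 hp).2
  refine ⟨Q, filter_subset _ _, ⟨fun p hp q hq h => ?_, fun p hp q hq h => ?_⟩, ?_⟩
  · have h₂ : p.2 = q.2 := hf_inj (by rw [hfQ hp, hfQ hq, h])
    exact Prod.ext h h₂
  · have h₁ : p.1 = q.1 := Sum.inl_injective (by rw [← hfQ hp, ← hfQ hq, h])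
    exact Prod.ext h₁ h
  · have hcover : univ ⊆ Q.image Prod.snd ∪ univ.filter fun b => (f b).isRight := by
      intro b _
      cases hfb : f b with
      | inl a =>
        have ha : (a, b) ∈ P := by simpa [t, hfb] using hf b
        exact mem_union_left _ (mem_image.2 ⟨(a, b), mem_filter.2 ⟨ha, hfb⟩, rfl⟩)
      | inr i => simp [hfb]
    have hright : #(univ.filter fun b => (f b).isRight) ≤ d := by
      simpa using card_le_card_of_injOn f (t := univ.map .inr) (fun b hb => by
        obtain ⟨i, hi⟩ := Sum.isRight_iff.1 (mem_filter.1 hb).2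
        exact mem_map.2 ⟨i, mem_univ _, hi.symm⟩) hf_inj.injOn
    calc Fintype.card β ≤ #(Q.image Prod.snd ∪ univ.filter fun b => (f b).isRight) :=
          card_le_card hcover
      _ ≤ #Q + d := (card_union_le _ _).trans (add_le_add card_image_le hright)

theorem card_le_of_forall_isPairMatching_card_ne [Fintype α] [Fintype β] [DecidableEq α]
    [DecidableEq β] {r : ℕ} (hrβ : r ≤ Fintype.card β) (hβα : Fintype.card β ≤ Fintype.card α)
    (P : Finset (α × β)) (hP : ∀ Q ⊆ P, IsPairMatching Q → #Q ≠ r) :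
    #P ≤ (r - 1) * Fintype.card α := by
  by_cases hall : ∀ S : Finset β, #S ≤ #(S.biUnion (nbhd P)) + (Fintype.card β - r)
  · obtain ⟨Q, hQP, hQ, hQcard⟩ := exists_isPairMatching_of_card_le_card_biUnion_add P _ hall
    obtain ⟨Q', hQ'Q, hQ'⟩ := exists_subset_card_eq (show r ≤ #Q by omega)
    exact absurd hQ' (hP Q' (hQ'Q.trans hQP) (hQ.mono hQ'Q))
  · push Not at hall
    obtain ⟨S, hS⟩ := hall
    have hSβ : #S ≤ Fintype.card β := card_le_univ S
    calc #P ≤ #S * #(S.biUnion (nbhd P)) + #Sᶜ * Fintype.card α :=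
          card_le_card_mul_card_biUnion_add P S
      _ ≤ Fintype.card α * #(S.biUnion (nbhd P)) + (Fintype.card β - #S) * Fintype.card α := by
          rw [card_compl]
          gcongr
          exact hSβ.trans hβα
      _ = (#(S.biUnion (nbhd P)) + (Fintype.card β - #S)) * Fintype.card α := by ring
      _ ≤ (r - 1) * Fintype.card α := by
          gcongr
          omega

section CompleteBipartite

def bipartiteEdge (p : α × β) : Sym2 (α ⊕ β) := s(.inl p.1, .inr p.2)

lemma bipartiteEdge_injective : Function.Injective (bipartiteEdge (α := α) (β := β)) := by
  rintro ⟨a, b⟩ ⟨a', b'⟩ h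
  simpa [bipartiteEdge] using h

lemma range_bipartiteEdge :
    Set.range bipartiteEdge = (completeBipartiteGraph α β).edgeSet :=
  edgeSet_completeBipartiteGraph.symm

lemma mem_bipartiteEdge {p : α × β} {v : α ⊕ β} :
    v ∈ bipartiteEdge p ↔ v = .inl p.1 ∨ v = .inr p.2 :=
  Sym2.mem_iff

variable [DecidableEq α] [DecidableEq β]

lemma isMatchingSet_image_bipartiteEdge_iff {Q : Finset (α × β)} :
    IsMatchingSet (Q.image bipartiteEdge) ↔ IsPairMatching Q := by
  constructor
  · intro h
    have eq_of_mem {p q : α × β} (hp : p ∈ Q) (hq : q ∈ Q) (v : α ⊕ β)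
        (hvp : v ∈ bipartiteEdge p) (hvq : v ∈ bipartiteEdge q) : p = q :=
      by_contra fun hpq => h _ (mem_image_of_mem _ hp) _ (mem_image_of_mem _ hq)
        (bipartiteEdge_injective.ne hpq) v hvp hvq
    exact ⟨fun p hp q hq h₁ => eq_of_mem hp hq (.inl p.1) (mem_bipartiteEdge.2 (.inl rfl))
        (mem_bipartiteEdge.2 (.inl (congrArg _ h₁))),
      fun p hp q hq h₂ => eq_of_mem hp hq (.inr p.2) (mem_bipartiteEdge.2 (.inr rfl))
        (mem_bipartiteEdge.2 (.inr (congrArg _ h₂)))⟩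
  · rintro ⟨h₁, h₂⟩ _ he _ hf hne v hve hvf
    obtain ⟨p, hp, rfl⟩ := mem_image.1 he
    obtain ⟨q, hq, rfl⟩ := mem_image.1 hf
    have hpq : p ≠ q := fun h => hne (h ▸ rfl)
    rw [mem_bipartiteEdge] at hve hvf
    rcases hve with rfl | rfl <;> rcases hvf with h | h
    · exact hpq (h₁ hp hq (Sum.inl_injective h))
    · exact Sum.inl_ne_inr h
    · exact Sum.inr_ne_inl h
    · exact hpq (h₂ hp hq (Sum.inr_injective h))

lemma card_le_of_forall_isMatchingSet_card_ne [Fintype α] [Fintype β] {r : ℕ}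
    (hrβ : r ≤ Fintype.card β) (hβα : Fintype.card β ≤ Fintype.card α)
    (E : Finset (Sym2 (α ⊕ β))) (hE : ↑E ⊆ (completeBipartiteGraph α β).edgeSet)
    (hM : ∀ M ⊆ E, IsMatchingSet M → #M ≠ r) :
    #E ≤ (r - 1) * Fintype.card α := by
  rw [← range_bipartiteEdge, ← Set.image_univ, ← coe_univ] at hE
  obtain ⟨P, -, rfl⟩ := subset_set_image_iff.1 hE
  rw [card_image_of_injective _ bipartiteEdge_injective]
  refine card_le_of_forall_isPairMatching_card_ne hrβ hβα P fun Q hQP hQ => ?_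
  simpa [card_image_of_injective _ bipartiteEdge_injective] using
    hM (Q.image bipartiteEdge) (image_subset_image hQP) (isMatchingSet_image_bipartiteEdge_iff.2 hQ)

lemma card_le_of_isMatchingSet_of_subset_image_product [Fintype α] {T : Finset β}
    {M : Finset (Sym2 (α ⊕ β))} (hMT : M ⊆ (univ ×ˢ T).image bipartiteEdge)
    (hM : IsMatchingSet M) : #M ≤ #T := by
  obtain ⟨Q, hQT, rfl⟩ := subset_image_iff.1 hMT
  rw [card_image_of_injective _ bipartiteEdge_injective]
  exact card_le_card_of_injOn Prod.snd (fun p hp => (mem_product.1 (hQT hp)).2)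
    (isMatchingSet_image_bipartiteEdge_iff.1 hM).2

theorem exMatching_completeBipartiteGraph [Fintype α] [Fintype β] {r : ℕ} (hr : 1 ≤ r)
    (hrβ : r ≤ Fintype.card β) (hβα : Fintype.card β ≤ Fintype.card α) :
    exMatching (completeBipartiteGraph α β) r = (r - 1) * Fintype.card α := by
  refine IsGreatest.csSup_eq ⟨?_, ?_⟩
  · obtain ⟨T, -, hT⟩ := exists_subset_card_eq (s := (univ : Finset β)) (n := r - 1)
      (by rw [card_univ]; omega)
    refine ⟨(univ ×ˢ T).image bipartiteEdge, ?_, fun M hMT hM => ?_, ?_⟩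
    · rw [coe_image, ← range_bipartiteEdge]
      exact Set.image_subset_range _ _
    · have := card_le_of_isMatchingSet_of_subset_image_product hMT hM
      omega
    · rw [card_image_of_injective _ bipartiteEdge_injective, card_product, card_univ, hT, mul_comm]
  · rintro k ⟨E, hE, hM, rfl⟩
    exact card_le_of_forall_isMatchingSet_card_ne hrβ hβα E hE hM

end CompleteBipartite

/-- For m ≥ n ≥ r ≥ 1, ex(K_{m,n}, rK₂) = (r − 1)m. -/
theorem stmt_15 (m n r : ℕ) (hr : 1 ≤ r) (hnr : r ≤ n) (hmn : n ≤ m) :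
    exMatching (completeBipartiteGraph (Fin m) (Fin n)) r = (r - 1) * m := by
  simpa using exMatching_completeBipartiteGraph (α := Fin m) (β := Fin n) hr
    (by simpa using hnr) (by simpa using hmn)
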